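/- arXiv:2504.04639 — 5 statements merged into one kernel-verified Lean document; each statement's English description precedes it below -/
import Mathlib

section
/- For any minion 𝒨 and any h ∈ ℕ, there is a partial minion isomorphism F from 𝒨 to the h-dimensional closure 𝒨^(h), defined on all elements of arity at most h, i.e., a bijective arity-preserving and minor-preserving map between the elements of arity ≤ h of 𝒨 and those of 𝒨^(h). -/
/-- An (abstract) minion: a family of sets `elts n` together with minoring operations
`map π : elts n → elts m` for every `π : Fin n → Fin m`, satisfying the identity and
composition laws. -/
structure Minion where
  elts : ℕ → Type
  map : ∀ {n m : ℕ}, (Fin n → Fin m) → elts n → elts m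
  map_id : ∀ {n : ℕ} (f : elts n), map id f = f
  map_comp : ∀ {n m k : ℕ} (π₁ : Fin m → Fin k) (π₂ : Fin n → Fin m) (f : elts n),
    map (π₁ ∘ π₂) f = map π₁ (map π₂ f)

/-- An `n`-ary system of `k`-ary minors over `M`: a map `ζ` from maps `[n] → [k]` to
`k`-ary elements such that `ζ(π)^σ = ζ(σ ∘ π)`. -/
def IsSystem (M : Minion) (k n : ℕ) (ζ : (Fin n → Fin k) → M.elts k) : Prop :=
  ∀ (π : Fin n → Fin k) (σ : Fin k → Fin k), M.map σ (ζ π) = ζ (σ ∘ π)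

/-- The `h`-dimensional closure of a minion: its `n`-ary elements are the `n`-ary
systems of `h`-ary minors, and minoring is given by `ζ^σ(π) = ζ(π ∘ σ)`. -/
def Minion.closure (M : Minion) (h : ℕ) : Minion where
  elts n := { ζ : (Fin n → Fin h) → M.elts h // IsSystem M h n ζ }
  map σ ζ := ⟨fun π => ζ.1 (π ∘ σ), fun π τ => ζ.2 (π ∘ σ) τ⟩
  map_id _ := rfl
  map_comp _ _ _ := rfl

/-- For any minion `𝒨` and any `h ∈ ℕ`, there is a partial minion
isomorphism from `𝒨` to the `h`-dimensional closure `𝒨^(h)`, defined on all elements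
of arity at most `h` (arities are positive): an arity-preserving, minor-preserving map
between the elements of arity ≤ h which is bijective at each arity ≤ h. -/
theorem stmt1 (M : Minion) (h : ℕ) :
    ∃ F : ∀ n, 1 ≤ n → n ≤ h → M.elts n → (M.closure h).elts n,
      (∀ (n m : ℕ) (h1n : 1 ≤ n) (hnh : n ≤ h) (h1m : 1 ≤ m) (hmh : m ≤ h)
        (π : Fin n → Fin m) (f : M.elts n),
        F m h1m hmh (M.map π f) = (M.closure h).map π (F n h1n hnh f)) ∧
      (∀ (n : ℕ) (h1n : 1 ≤ n) (hnh : n ≤ h), Function.Bijective (F n h1n hnh)) := by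

  refine ⟨fun n h1n hnh f => ⟨fun π => M.map π f, fun π σ => (M.map_comp σ π f).symm⟩,
    ?_, ?_⟩
  · intro n m h1n hnh h1m hmh π f
    apply Subtype.ext
    funext ρ
    exact (M.map_comp ρ π f).symm
  · intro n h1n hnh
    set e : Fin n → Fin h := Fin.castLE hnh with he
    set r : Fin h → Fin n := fun x => if hx : x.val < n then ⟨x.val, hx⟩ else ⟨0, h1n⟩
      with hr
    have hre : r ∘ e = id := by
      funext x
      simp [hr, he, x.isLt]
    constructor
    · intro f g hfg
      have h2 : M.map e f = M.map e g := congrFun (congrArg Subtype.val hfg) e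
      have h3 := congrArg (M.map r) h2
      rw [← M.map_comp, ← M.map_comp, hre, M.map_id, M.map_id] at h3
      exact h3
    · intro ζ
      refine ⟨M.map r (ζ.1 e), ?_⟩
      apply Subtype.ext
      funext π
      have hπ : π = (π ∘ r) ∘ e := by
        rw [Function.comp_assoc, hre]; rfl
      calc M.map π (M.map r (ζ.1 e)) = M.map (π ∘ r) (ζ.1 e) := (M.map_comp _ _ _).symm
        _ = ζ.1 ((π ∘ r) ∘ e) := ζ.2 e (π ∘ r)
        _ = ζ.1 π := by rw [← hπ]
end

section
/- Let 𝒨 and 𝒩 be minions and h ∈ ℕ. Then there exists a partial minion homomorphism from 𝒨 to 𝒩 defined up to arity h if and only if there exists a (total) minion homomorphism from 𝒨 to 𝒩^(h), the h-dimensional closure of 𝒩. -/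
/-- Let `𝒨` and `𝒩` be minions and `h ∈ ℕ`. There exists a partial
minion homomorphism from `𝒨` to `𝒩` defined up to arity `h` (on all elements of
positive arity ≤ h, preserving arities and minoring) if and only if there exists a total
minion homomorphism from `𝒨` to the `h`-dimensional closure `𝒩^(h)`. -/
theorem stmt2 (M N : Minion) (h : ℕ) :
    (∃ F : ∀ n, 1 ≤ n → n ≤ h → M.elts n → N.elts n,
      ∀ (n m : ℕ) (h1n : 1 ≤ n) (hnh : n ≤ h) (h1m : 1 ≤ m) (hmh : m ≤ h)
        (π : Fin n → Fin m) (f : M.elts n),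
        F m h1m hmh (M.map π f) = N.map π (F n h1n hnh f)) ↔
    (∃ G : ∀ n, 1 ≤ n → M.elts n → (N.closure h).elts n,
      ∀ (n m : ℕ) (h1n : 1 ≤ n) (h1m : 1 ≤ m) (π : Fin n → Fin m) (f : M.elts n),
        G m h1m (M.map π f) = (N.closure h).map π (G n h1n f)) := by
  constructor
  · rintro ⟨F, hF⟩
    rcases Nat.eq_zero_or_pos h with hh | hh
    · subst hh
      refine ⟨fun n h1n f => ⟨fun π => (π ⟨0, h1n⟩).elim0, fun π σ => (π ⟨0, h1n⟩).elim0⟩,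
        fun n m h1n h1m π f => ?_⟩
      apply Subtype.ext
      funext τ
      exact (τ ⟨0, h1m⟩).elim0
    · refine ⟨fun n h1n f => ⟨fun π => F h hh le_rfl (M.map π f), fun π σ => ?_⟩,
        fun n m h1n h1m π f => ?_⟩
      · rw [← hF h h hh le_rfl hh le_rfl σ (M.map π f), ← M.map_comp]
      · apply Subtype.ext
        funext τ
        show F h hh le_rfl (M.map τ (M.map π f)) = F h hh le_rfl (M.map (τ ∘ π) f)
        rw [M.map_comp]
  · rintro ⟨G, hG⟩
    -- retraction `r n : Fin h → Fin n` and inclusion `Fin.castLE`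
    set r : ∀ n, 1 ≤ n → Fin h → Fin n :=
      fun n h1n i => if hi : i.val < n then ⟨i, hi⟩ else ⟨0, h1n⟩ with hr
    have hretr : ∀ (n : ℕ) (h1n : 1 ≤ n) (hnh : n ≤ h),
        (r n h1n) ∘ (Fin.castLE hnh) = id := by
      intro n h1n hnh
      funext i
      simp only [hr, Function.comp_apply, Fin.castLE, id]
      rw [dif_pos i.isLt]
    refine ⟨fun n h1n hnh f => N.map (r n h1n) ((G n h1n f).1 (Fin.castLE hnh)),
      fun n m h1n hnh h1m hmh π f => ?_⟩
    have h1 : (G m h1m (M.map π f)).1 (Fin.castLE hmh)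
        = (G n h1n f).1 ((Fin.castLE hmh) ∘ π) := by
      rw [hG n m h1n h1m π f]; rfl
    show N.map (r m h1m) ((G m h1m (M.map π f)).1 (Fin.castLE hmh))
      = N.map π (N.map (r n h1n) ((G n h1n f).1 (Fin.castLE hnh)))
    rw [h1]
    have h2 : (Fin.castLE hmh) ∘ π
        = ((Fin.castLE hmh) ∘ π ∘ (r n h1n)) ∘ (Fin.castLE hnh) := by
      rw [Function.comp_assoc, Function.comp_assoc, hretr n h1n hnh]
      rfl
    rw [h2, ← (G n h1n f).2 (Fin.castLE hnh) ((Fin.castLE hmh) ∘ π ∘ (r n h1n))]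
    rw [← N.map_comp (r m h1m) (Fin.castLE hmh ∘ π ∘ r n h1n),
      ← N.map_comp π (r n h1n)]
    congr 1
    funext i
    have : (r m h1m) ((Fin.castLE hmh) (π ((r n h1n) i))) = π ((r n h1n) i) := by
      have := congrFun (hretr m h1m hmh) (π ((r n h1n) i))
      simpa using this
    simpa using this
end

section
/- If h' ≤ h, then there is a minion homomorphism from 𝒨^(h) to 𝒨^(h'), obtained by sending an n-ary system ζ of h-ary minors to the n-ary system ζ' of h'-ary minors defined by ζ'(π) = ζ(α∘π)^β, where α : [h'] → [h] and β : [h] → [h'] satisfy β∘α = id. -/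
/-- If `h' ≤ h`, then there is a minion homomorphism from `𝒨^(h)` to
`𝒨^(h')`, obtained by sending an `n`-ary system `ζ` of `h`-ary minors to the `n`-ary
system `ζ'` of `h'`-ary minors defined by `ζ'(π) = ζ(α∘π)^β`, where `α : [h'] → [h]`
and `β : [h] → [h']` satisfy `β ∘ α = id`. -/
theorem stmt3 (M : Minion) (h' h : ℕ) (hle : h' ≤ h)
    (α : Fin h' → Fin h) (β : Fin h → Fin h') (hβα : β ∘ α = id) :
    ∃ G : ∀ n, (M.closure h).elts n → (M.closure h').elts n,
      (∀ (n : ℕ) (ζ : (M.closure h).elts n) (π : Fin n → Fin h'),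
        (G n ζ).1 π = M.map β (ζ.1 (α ∘ π))) ∧
      (∀ (n m : ℕ) (π : Fin n → Fin m) (ζ : (M.closure h).elts n),
        G m ((M.closure h).map π ζ) = (M.closure h').map π (G n ζ)) := by
  refine ⟨fun n ζ => ⟨fun π => M.map β (ζ.1 (α ∘ π)), ?_⟩, fun n ζ π => rfl,
    fun n m π ζ => Subtype.ext (funext fun τ => rfl)⟩
  intro π σ
  show M.map σ (M.map β (ζ.1 (α ∘ π))) = M.map β (ζ.1 (α ∘ (σ ∘ π)))
  have h1 : ζ.1 (α ∘ (σ ∘ π)) = M.map (α ∘ σ ∘ β) (ζ.1 (α ∘ π)) := by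
    rw [ζ.2 (α ∘ π) (α ∘ σ ∘ β)]
    refine congrArg ζ.1 (funext fun x => ?_)
    have := congrFun hβα (π x)
    simp only [Function.comp_apply, id_eq] at this ⊢
    rw [this]
  have h2 : β ∘ (α ∘ σ ∘ β) = σ ∘ β := by
    funext x
    have := congrFun hβα (σ (β x))
    simp only [Function.comp_apply, id_eq] at this ⊢
    rw [this]
  rw [h1, ← M.map_comp, ← M.map_comp, h2]
end

section
/- Let 𝒨 be a minion, 𝒟 a description over 𝒨, Q a 𝒟-stable property, and h ∈ ℕ. If for each f ∈ Q there is an internal reference φ_f(x) to Q with respect to 𝒟, of arity at most h, such that 𝒨 ⊨ φ_f(f), then Q is internal at arity h with respect to 𝒟 (i.e., every partial minion homomorphism F : 𝒨 ⇀ 𝒨/𝒟 defined up to arity h satisfies F(Q) ⊆ Q/𝒟). -/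
/-- The equivalence relation induced by a description (a family of properties). -/
def DRel (M : Minion) {ι : Type} (ar : ι → ℕ) (P : ∀ i, Set (M.elts (ar i)))
    (n : ℕ) (f g : M.elts n) : Prop :=
  ∀ (i : ι) (π : Fin n → Fin (ar i)), (M.map π f ∈ P i ↔ M.map π g ∈ P i)

/-- The quotient minion `𝒨/𝒟`. -/
def Minion.quot (M : Minion) {ι : Type} (ar : ι → ℕ) (P : ∀ i, Set (M.elts (ar i))) :
    Minion where
  elts n := Quot (DRel M ar P n)
  map π := Quot.map (M.map π) (by
    intro f g hfg i σ
    rw [← M.map_comp, ← M.map_comp]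
    exact hfg i (σ ∘ π))
  map_id := by
    intro n f
    induction f using Quot.ind with
    | _ f => exact congrArg (Quot.mk _) (M.map_id f)
  map_comp := by
    intro n m k π₁ π₂ f
    induction f using Quot.ind with
    | _ f => exact congrArg (Quot.mk _) (M.map_comp π₁ π₂ f)

/-- Terms of the primitive positive language of minions, with one free variable of
arity `a` and bound variables `i : Fin k` of arities `var_ar i`: each term is a minor
`x^π` of the free variable or a minor `y_i^π` of a bound variable. -/
inductive PPTerm (a : ℕ) {k : ℕ} (var_ar : Fin k → ℕ) : ℕ → Type
  | free {m : ℕ} (π : Fin a → Fin m) : PPTerm a var_ar m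
  | bound {m : ℕ} (i : Fin k) (π : Fin (var_ar i) → Fin m) : PPTerm a var_ar m

/-- A primitive positive formula with one free variable of arity `a`: a list of
existentially quantified variables (with arities) and a conjunction of equations
between terms. -/
structure PPFormula (a : ℕ) where
  k : ℕ
  var_ar : Fin k → ℕ
  eqs : List (Σ m : ℕ, PPTerm a var_ar m × PPTerm a var_ar m)

/-- Evaluation of a pp-term in a minion. -/
def PPTerm.eval (M : Minion) {a k : ℕ} {var_ar : Fin k → ℕ}
    (x : M.elts a) (w : ∀ i, M.elts (var_ar i)) :
    ∀ {m : ℕ}, PPTerm a var_ar m → M.elts m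
  | _, .free π => M.map π x
  | _, .bound i π => M.map π (w i)

/-- Satisfaction `M ⊨ Φ(x)` of a pp-formula in a minion. -/
def PPFormula.Sat (M : Minion) {a : ℕ} (Φ : PPFormula a) (x : M.elts a) : Prop :=
  ∃ w : ∀ i, M.elts (Φ.var_ar i),
    ∀ e ∈ Φ.eqs, PPTerm.eval M x w e.2.1 = PPTerm.eval M x w e.2.2

/-- The arity of a pp-formula is at most `h`: every sub-term has arity at most `h`. -/
def PPFormula.arityLe {a : ℕ} (Φ : PPFormula a) (h : ℕ) : Prop :=
  a ≤ h ∧ (∀ i, Φ.var_ar i ≤ h) ∧ ∀ e ∈ Φ.eqs, e.1 ≤ h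

/-- All arities occurring in a pp-formula are positive (the paper's `ℕ` starts at `1`). -/
def PPFormula.posArity {a : ℕ} (Φ : PPFormula a) : Prop :=
  (∀ i, 1 ≤ Φ.var_ar i) ∧ ∀ e ∈ Φ.eqs, 1 ≤ e.1

/-- Let `𝒨` be a minion, `𝒟` a description over `𝒨`, `Q` a `𝒟`-stable
property, and `h ∈ ℕ`. If for each `f ∈ Q` there is an internal reference `φ_f(x)` to `Q`
w.r.t. `𝒟` (a pp-formula whose satisfaction by a class `⟦g⟧` in `𝒨/𝒟` forces `⟦g⟧ ∈ Q/𝒟`,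
here: `g ∈ Q`), of arity at most `h`, with `𝒨 ⊨ φ_f(f)`, then `Q` is internal at arity `h`:
every partial minion homomorphism `F : 𝒨 ⇀ 𝒨/𝒟` defined up to arity `h` maps `Q` into
`Q/𝒟`. -/
theorem stmt5 (M : Minion) {ι : Type} (ar : ι → ℕ) (P : ∀ i, Set (M.elts (ar i)))
    (nQ : ℕ) (Q : Set (M.elts nQ)) (h : ℕ) (h1Q : 1 ≤ nQ) (hQh : nQ ≤ h)
    (hstable : ∀ f g : M.elts nQ, DRel M ar P nQ f g → f ∈ Q → g ∈ Q)
    (href : ∀ f ∈ Q, ∃ Φ : PPFormula nQ, Φ.arityLe h ∧ Φ.posArity ∧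
      (∀ g : M.elts nQ, PPFormula.Sat (M.quot ar P) Φ (Quot.mk (DRel M ar P nQ) g) → g ∈ Q) ∧
      PPFormula.Sat M Φ f)
    (F : ∀ n, 1 ≤ n → n ≤ h → M.elts n → (M.quot ar P).elts n)
    (hF : ∀ (n m : ℕ) (h1n : 1 ≤ n) (hnh : n ≤ h) (h1m : 1 ≤ m) (hmh : m ≤ h)
      (π : Fin n → Fin m) (f : M.elts n),
      F m h1m hmh (M.map π f) = (M.quot ar P).map π (F n h1n hnh f)) :
    ∀ f ∈ Q, ∃ g ∈ Q, F nQ h1Q hQh f = Quot.mk (DRel M ar P nQ) g := by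
  intro f hf
  obtain ⟨Φ, ⟨haQ, havar, haeq⟩, ⟨hpvar, hpeq⟩, hforce, w, hw⟩ := href f hf
  obtain ⟨g, hg⟩ := Quot.exists_rep (F nQ h1Q hQh f)
  -- the witnesses in the quotient
  set w' : ∀ i, (M.quot ar P).elts (Φ.var_ar i) :=
    fun i => F (Φ.var_ar i) (hpvar i) (havar i) (w i) with hw'
  have key : ∀ {m : ℕ} (h1m : 1 ≤ m) (hmh : m ≤ h) (t : PPTerm nQ Φ.var_ar m),
      F m h1m hmh (PPTerm.eval M f w t) =
        PPTerm.eval (M.quot ar P) (F nQ h1Q hQh f) w' t := by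
    intro m h1m hmh t
    cases t with
    | free π => exact hF nQ m h1Q hQh h1m hmh π f
    | bound i π => exact hF (Φ.var_ar i) m (hpvar i) (havar i) h1m hmh π (w i)
  refine ⟨g, ?_, hg.symm⟩
  apply hforce
  refine ⟨w', ?_⟩
  intro e he
  have h1m := hpeq e he
  have hmh := haeq e he
  rw [hg, ← key h1m hmh e.2.1, ← key h1m hmh e.2.2, hw e he]
end

section
/- Let 𝒨 be a minion whose rank is at most r, and let h ≥ r. Then the h-dimensional closure 𝒨^(h) is isomorphic (as a minion) to the polymorphism minion Pol(K_r^h, F), where F = F_𝒨(K_r^h) is the free structure of 𝒨 generated by the complete structure K_r^h. -/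
/-- A relational structure over a signature `S` with arities `arR`. -/
structure RelStruct (S : Type) (arR : S → ℕ) where
  carrier : Type
  rel : ∀ R : S, Set (Fin (arR R) → carrier)

/-- Homomorphisms of relational structures. -/
def IsHom {S : Type} {arR : S → ℕ} (A B : RelStruct S arR)
    (f : A.carrier → B.carrier) : Prop :=
  ∀ (R : S) (t : Fin (arR R) → A.carrier), t ∈ A.rel R → (fun i => f (t i)) ∈ B.rel R

/-- The `n`-th power of a relational structure. -/
def RelStruct.power {S : Type} {arR : S → ℕ} (A : RelStruct S arR) (n : ℕ) :
    RelStruct S arR where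
  carrier := Fin n → A.carrier
  rel R := { t | ∀ j : Fin n, (fun i => t i j) ∈ A.rel R }

/-- The polymorphism minion `Pol(A, B)`: its `n`-ary elements are the homomorphisms
`Aⁿ → B`, with minoring `f^π(a) = f(a ∘ π)`. -/
def polMinion {S : Type} {arR : S → ℕ} (A B : RelStruct S arR) : Minion where
  elts n := { f : (Fin n → A.carrier) → B.carrier // IsHom (A.power n) B f }
  map π f := ⟨fun a => f.1 (a ∘ π), by
    intro R t ht
    exact f.2 R (fun i => t i ∘ π) (fun j => ht (π j))⟩
  map_id _ := rfl
  map_comp _ _ _ := rfl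

/-- The complete structure `K_r^h`: universe `[r]`, a single relation of arity `r^h`
consisting of the `h` tuples `(π₁(i),…,π_{r^h}(i))`, where `π₁,…,π_{r^h}` enumerates
the maps `[h] → [r]`. -/
def completeK (r h : ℕ) : RelStruct Unit (fun _ => r ^ h) where
  carrier := Fin r
  rel _ := { t | ∃ i : Fin h, t = fun j => finFunctionFinEquiv.symm j i }

/-- The free structure `F_𝒨(K_r^h)` of a minion `𝒨` generated by `K_r^h`: universe
`𝒨(r)`; a tuple is in the relation iff it is `(g^{π₁},…,g^{π_{r^h}})` for some `g ∈ 𝒨(h)`,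
where `π_j : Fin h → Fin r` is the `j`-th projection of the relation of `K_r^h`. -/
def freeK (M : Minion) (r h : ℕ) : RelStruct Unit (fun _ => r ^ h) where
  carrier := M.elts r
  rel _ := { t | ∃ g : M.elts h, ∀ j : Fin (r ^ h), M.map (finFunctionFinEquiv.symm j) g = t j }

/-- Let `𝒨` be a minion whose rank is at most `r` (i.e. same-arity
elements with identical `r`-ary minors are equal), and let `h ≥ r ≥ 1`.  Then the
`h`-dimensional closure `𝒨^(h)` is isomorphic, as a minion, to the polymorphism minion
`Pol(K_r^h, F_𝒨(K_r^h))`. -/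
theorem stmt8 (M : Minion) (r h : ℕ) (hr1 : 1 ≤ r) (hrh : r ≤ h)
    (hrank : ∀ (n : ℕ), 1 ≤ n → ∀ f g : M.elts n,
      (∀ π : Fin n → Fin r, M.map π f = M.map π g) → f = g) :
    ∃ F : ∀ n, 1 ≤ n →
        (M.closure h).elts n → (polMinion (completeK r h) (freeK M r h)).elts n,
      (∀ (n m : ℕ) (h1n : 1 ≤ n) (h1m : 1 ≤ m) (π : Fin n → Fin m)
        (ζ : (M.closure h).elts n),
        F m h1m ((M.closure h).map π ζ) =
          (polMinion (completeK r h) (freeK M r h)).map π (F n h1n ζ)) ∧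
      (∀ (n : ℕ) (h1n : 1 ≤ n), Function.Bijective (F n h1n)) := by
  have h1h : 1 ≤ h := le_trans hr1 hrh
  set e : Fin r → Fin h := Fin.castLE hrh with he
  set ρ : Fin h → Fin r := fun i => if hi : i.val < r then ⟨i.val, hi⟩ else ⟨0, hr1⟩ with hρ
  have hρe : ∀ j : Fin r, ρ (e j) = j := by
    intro j
    simp only [hρ, he]
    rw [dif_pos (by simpa using j.isLt)]
    rfl
  have hρea : ∀ {n : ℕ} (a : Fin n → Fin r), ρ ∘ (e ∘ a) = a := by
    intro n a; funext j; exact hρe (a j)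
  -- key consequence of the homomorphism property of polymorphisms
  have polspec : ∀ (n : ℕ) (f : (polMinion (completeK r h) (freeK M r h)).elts n)
      (c : Fin n → Fin h), ∃ g : M.elts h, ∀ π : Fin h → Fin r,
        M.map π g = f.1 (π ∘ c) := by
    intro n f c
    obtain ⟨g, hg⟩ := f.2 () (fun idx j => finFunctionFinEquiv.symm idx (c j))
        (fun j => ⟨c j, rfl⟩)
    refine ⟨g, fun π => ?_⟩
    have := hg (finFunctionFinEquiv π)
    simp at this; exact this
  refine ⟨fun n _ ζ => ⟨fun a => M.map ρ (ζ.1 (e ∘ a)), ?_⟩, ?_, ?_⟩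
  · -- homomorphism property of the image
    rintro ⟨⟩ t ht
    choose c hc using ht
    have htc : ∀ idx, t idx = finFunctionFinEquiv.symm idx ∘ c :=
      fun idx => funext fun j => congrFun (hc j) idx
    refine ⟨ζ.1 c, fun idx => ?_⟩
    set π : Fin h → Fin r := finFunctionFinEquiv.symm idx with hπ
    show M.map π (ζ.1 c) = M.map ρ (ζ.1 (e ∘ t idx))
    rw [htc idx]
    have h1 : ζ.1 (e ∘ (π ∘ c)) = M.map (e ∘ π) (ζ.1 c) := (ζ.2 c (e ∘ π)).symm
    have : e ∘ (π ∘ c) = e ∘ ((fun j => finFunctionFinEquiv.symm idx ∘ c) ()) := by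
      rfl
    calc M.map π (ζ.1 c) = M.map (ρ ∘ (e ∘ π)) (ζ.1 c) := by
          congr 1; funext j; exact (hρe (π j)).symm
      _ = M.map ρ (M.map (e ∘ π) (ζ.1 c)) := M.map_comp _ _ _
      _ = M.map ρ (ζ.1 ((e ∘ π) ∘ c)) := by rw [ζ.2 c (e ∘ π)]
      _ = M.map ρ (ζ.1 (e ∘ (finFunctionFinEquiv.symm idx ∘ c))) := rfl
  · -- naturality
    intro n m h1n h1m π ζ
    rfl
  · -- bijectivity
    intro n h1n
    constructor
    · intro ζ ζ' hζ
      have key : ∀ a : Fin n → Fin r,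
          M.map ρ (ζ.1 (e ∘ a)) = M.map ρ (ζ'.1 (e ∘ a)) :=
        fun a => congrFun (congrArg Subtype.val hζ) a
      apply Subtype.ext
      funext π
      apply hrank h h1h
      intro τ
      have expand : ∀ (ξ : (M.closure h).elts n),
          M.map τ (ξ.1 π) = M.map ρ (ξ.1 (e ∘ (τ ∘ π))) := by
        intro ξ
        calc M.map τ (ξ.1 π) = M.map (ρ ∘ (e ∘ τ)) (ξ.1 π) := by
              congr 1; funext j; exact (hρe (τ j)).symm
          _ = M.map ρ (M.map (e ∘ τ) (ξ.1 π)) := M.map_comp _ _ _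
          _ = M.map ρ (ξ.1 ((e ∘ τ) ∘ π)) := by rw [ξ.2 π (e ∘ τ)]
          _ = M.map ρ (ξ.1 (e ∘ (τ ∘ π))) := rfl
      rw [expand ζ, expand ζ', key (τ ∘ π)]
    · intro f
      choose G hG using polspec n f
      have sys : IsSystem M h n G := by
        intro π σ
        apply hrank h h1h
        intro τ
        rw [← M.map_comp, hG, hG]
        rfl
      refine ⟨⟨G, sys⟩, ?_⟩
      apply Subtype.ext
      funext a
      show M.map ρ (G (e ∘ a)) = f.1 a
      rw [hG (e ∘ a) ρ]
      exact congrArg f.1 (hρea a)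
end
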